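/- Let M = M(S; F(I), G(Lambda); P) or M = M^0(S; F(I), G(Lambda); P) be a Rees matrix semigroup (without or with zero) over an isolation-free semigroupoid S. Then M is finitely generated (as a semigroup) if and only if (i) the indexing sets I and Lambda are finite, (ii) the semigroupoid S is finitely generated, and (iii) S P' S is a cofinite subsemigroupoid of S (that is, S^1 \ (S P' S) is finite), where P' is the set of non-zero entries of the sandwich matrix P and S P' S is the set of arrows of the form s p t with s, t ∈ S^1 and p ∈ P'. -/

import Mathlib

/- Common framework: graphs, path languages, synchronous regularity,
   semigroupoids, automatic structures, and Rees matrix constructions. -/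

namespace AutoRees

/-- Raw data of a semigroupoid: source and target maps on arrows together with a
totalised multiplication (whose values are only meaningful on composable pairs). -/
structure PreSgpd (O A : Type) where
  src : A → O
  tgt : A → O
  mul : A → A → A

/-- A semigroupoid: the multiplication respects sources and targets and is
associative, on composable pairs. -/
structure Sgpd (O A : Type) extends PreSgpd O A where
  src_mul : ∀ e f, tgt e = src f → src (mul e f) = src e
  tgt_mul : ∀ e f, tgt e = src f → tgt (mul e f) = tgt f
  mul_assoc' : ∀ e f g, tgt e = src f → tgt f = src g →
    mul (mul e f) g = mul e (mul f g)

/-- Evaluate a nonempty word of edge labels as a product in the semigroupoid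
(`none` on the empty word). -/
def evalPath? {O A E : Type} (S : PreSgpd O A) (lab : E → A) : List E → Option A
  | [] => none
  | e :: l => some ((l.map lab).foldl S.mul (lab e))

/-- The consecutive-compatibility condition making a list of edges a path. -/
def IsPathChain {V E : Type} (esrc etgt : E → V) (l : List E) : Prop :=
  List.Chain' (fun e f => etgt e = esrc f) l

/-- The target of a non-empty path. -/
def pathTgt? {V E : Type} (etgt : E → V) (l : List E) : Option V :=
  l.getLast?.map etgt

/-- The source of a non-empty path. -/
def pathSrc? {V E : Type} (esrc : E → V) (l : List E) : Option V :=
  l.head?.map esrc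

/-- A set of words is regular if it is a regular language in the usual sense. -/
def IsRegularSet {α : Type} (L : Set (List α)) : Prop :=
  Language.IsRegular (show Language α from L)

/-- The padding symbol used to pad a pair of paths, at the target of `l`
(the letters of the padded alphabet `X^$` are `Sum.inl` (a genuine edge) or
`Sum.inr (some v)` (the padding edge at vertex `v`)). -/
def padSym {V E : Type} (etgt : E → V) (l : List E) : E ⊕ Option V :=
  Sum.inr (l.getLast?.map etgt)

/-- The padded convolution `(a, b) δ_X` of a pair of paths. -/
def deltaPair {V E : Type} (etgt : E → V) (a b : List E) :
    List ((E ⊕ Option V) × (E ⊕ Option V)) :=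
  (a.map Sum.inl).zip (b.map Sum.inl) ++
    (if a.length ≤ b.length
      then (b.drop a.length).map (fun e => (padSym etgt a, Sum.inl e))
      else (a.drop b.length).map (fun e => (Sum.inl e, padSym etgt b)))

/-- A binary relation on paths is synchronously regular if its image under the
padding map is a regular language over the padded product alphabet. -/
def SyncRegular {V E : Type} (etgt : E → V) (R : Set (List E × List E)) : Prop :=
  IsRegularSet { w | ∃ p ∈ R, w = deltaPair etgt p.1 p.2 }

/-- A choice of representatives `(X, K, ρ)` for a semigroupoid `S`: a graph `X`
with vertex set `S^0` (edge set `E`, source `esrc`, target `etgt`), a semigroupoid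
morphism `ρ : X^+ → S` (induced by the edge-labelling `lab`), and a language `K`
of non-empty paths with `K ρ = S^1`. -/
structure ChoiceOfReps {O A : Type} (S : PreSgpd O A) (E : Type) where
  esrc : E → O
  etgt : E → O
  lab : E → A
  lab_src : ∀ e, S.src (lab e) = esrc e
  lab_tgt : ∀ e, S.tgt (lab e) = etgt e
  K : Set (List E)
  K_path : ∀ l ∈ K, l ≠ [] ∧ IsPathChain esrc etgt l
  K_onto : ∀ a : A, ∃ l ∈ K, evalPath? S lab l = some a

variable {O A E : Type} {S : PreSgpd O A}

/-- The relation `K_=` = {(u,v) ∈ K × K : u ρ = v ρ}. -/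
def relEq (C : ChoiceOfReps S E) : Set (List E × List E) :=
  { p | p.1 ∈ C.K ∧ p.2 ∈ C.K ∧ evalPath? S C.lab p.1 = evalPath? S C.lab p.2 }

/-- The relation `K_a` for an edge `a` of `X`. -/
def relEdge (C : ChoiceOfReps S E) (a : E) : Set (List E × List E) :=
  { p | p.1 ∈ C.K ∧ p.2 ∈ C.K ∧ pathTgt? C.etgt p.1 = some (C.esrc a) ∧
        evalPath? S C.lab (p.1 ++ [a]) = evalPath? S C.lab p.2 }

/-- The relation `K_a` for a vertex `a` of `X` (regarded as the empty path at `a`). -/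
def relVertex (C : ChoiceOfReps S E) (v : O) : Set (List E × List E) :=
  { p | p.1 ∈ C.K ∧ p.2 ∈ C.K ∧ pathTgt? C.etgt p.1 = some v ∧
        evalPath? S C.lab p.1 = evalPath? S C.lab p.2 }

/-- An automatic structure: a finitely generated choice of representatives with
`K` regular such that `K_a` is synchronously regular for every edge and vertex. -/
def IsAutomaticStructure (C : ChoiceOfReps S E) : Prop :=
  Finite E ∧ IsRegularSet C.K ∧
    (∀ a : E, SyncRegular C.etgt (relEdge C a)) ∧
    (∀ v : O, SyncRegular C.etgt (relVertex C v))

/-- The set of non-empty prefixes of words in `K`. -/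
def prefs {E : Type} (K : Set (List E)) : Set (List E) :=
  { p | p ≠ [] ∧ ∃ l ∈ K, p <+: l }

/-- The relation `K'_=` = {(u,v) ∈ K × Pref(K) : u ρ = v ρ}. -/
def relPrefEq (C : ChoiceOfReps S E) : Set (List E × List E) :=
  { p | p.1 ∈ C.K ∧ p.2 ∈ prefs C.K ∧ evalPath? S C.lab p.1 = evalPath? S C.lab p.2 }

/-- A prefix-automatic structure. -/
def IsPrefixAutomaticStructure (C : ChoiceOfReps S E) : Prop :=
  IsAutomaticStructure C ∧ SyncRegular C.etgt (relPrefEq C)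

/-- A cross-section: `ρ` restricted to `K` is injective. -/
def IsCrossSection (C : ChoiceOfReps S E) : Prop :=
  ∀ u ∈ C.K, ∀ v ∈ C.K, evalPath? S C.lab u = evalPath? S C.lab v → u = v

/-- `K` is closed under taking non-empty prefixes. -/
def IsPrefixClosed (C : ChoiceOfReps S E) : Prop :=
  ∀ l ∈ C.K, ∀ p : List E, p ≠ [] → p <+: l → p ∈ C.K

/-- A semigroupoid (or semigroup, in the one-object case) is automatic if it
admits an automatic structure. -/
def IsAutomatic (S : PreSgpd O A) : Prop :=
  ∃ (E : Type) (C : ChoiceOfReps S E), IsAutomaticStructure C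

/-- Prefix-automaticity. -/
def IsPrefixAutomatic (S : PreSgpd O A) : Prop :=
  ∃ (E : Type) (C : ChoiceOfReps S E), IsPrefixAutomaticStructure C

/-- Finite generation: every arrow is a (composable) product of arrows from some
fixed finite set. -/
def IsFG (S : PreSgpd O A) : Prop :=
  ∃ T : Set A, T.Finite ∧ ∀ a : A, ∃ l : List A, l ≠ [] ∧ (∀ x ∈ l, x ∈ T) ∧
    IsPathChain S.src S.tgt l ∧ evalPath? S id l = some a

/-- An arrow is an identity if it acts as an identity on all composable products. -/
def IsIdentity (S : PreSgpd O A) (e : A) : Prop :=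
  (∀ x, S.tgt e = S.src x → S.mul e x = x) ∧ (∀ y, S.tgt y = S.src e → S.mul y e = y)

/-- A small category is a semigroupoid with an identity arrow at every object. -/
def IsSmallCategory (S : PreSgpd O A) : Prop :=
  ∀ v : O, ∃ e : A, S.src e = v ∧ S.tgt e = v ∧ IsIdentity S e

/-- No object is isolated. -/
def IsolationFree (S : PreSgpd O A) : Prop :=
  ∀ v : O, ∃ a : A, S.src a = v ∨ S.tgt a = v

namespace Rees

variable {O A I Λ : Type}

/-- A triple `(i, x, λ)` is valid if `i F = x α` and `x ω = λ G`. -/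
def Valid (S : Sgpd O A) (F : I → O) (G : Λ → O) (t : I × A × Λ) : Prop :=
  F t.1 = S.src t.2.1 ∧ S.tgt t.2.1 = G t.2.2

/-- The set of valid Rees triples. -/
def Triples (S : Sgpd O A) (F : I → O) (G : Λ → O) : Type :=
  { t : I × A × Λ // Valid S F G t }

theorem prod_valid (S : Sgpd O A) {F : I → O} {G : Λ → O}
    {i : I} {x : A} {lam : Λ} {j : I} {y : A} {mu : Λ} {p : A}
    (hx : Valid S F G (i, x, lam)) (hy : Valid S F G (j, y, mu))
    (hps : S.src p = G lam) (hpt : S.tgt p = F j) :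
    Valid S F G (i, S.mul (S.mul x p) y, mu) := by
  obtain ⟨hx1, hx2⟩ := hx
  obtain ⟨hy1, hy2⟩ := hy
  have h1 : S.tgt x = S.src p := by rw [hps]; exact hx2
  have h2 : S.tgt p = S.src y := by rw [hpt]; exact hy1
  have h3 : S.tgt (S.mul x p) = S.src y := by rw [S.tgt_mul x p h1]; exact h2
  constructor
  · show F i = S.src (S.mul (S.mul x p) y)
    rw [S.src_mul _ y h3, S.src_mul x p h1]; exact hx1
  · show S.tgt (S.mul (S.mul x p) y) = G mu
    rw [S.tgt_mul _ y h3]; exact hy2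

/-- Data for a Rees matrix construction with zero over a semigroupoid `S`:
indexing functions `F`, `G` surjective onto the sets of sources and of targets
respectively, and a sandwich matrix `P` with entries in `S^1 ∪ {0}`
(`none` representing `0`) compatible with `F` and `G`. -/
structure Data0 (S : Sgpd O A) (I Λ : Type) where
  F : I → O
  G : Λ → O
  P : Λ → I → Option A
  F_into : ∀ i, ∃ a : A, S.src a = F i
  F_onto : ∀ a : A, ∃ i, F i = S.src a
  G_into : ∀ lam, ∃ a : A, S.tgt a = G lam
  G_onto : ∀ a : A, ∃ lam, G lam = S.tgt a
  P_src : ∀ lam i p, P lam i = some p → S.src p = G lam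
  P_tgt : ∀ lam i p, P lam i = some p → S.tgt p = F i

/-- Underlying set of the Rees matrix semigroup with zero (`none` is the zero). -/
def Carrier0 (S : Sgpd O A) (R : Data0 S I Λ) : Type :=
  Option (Triples S R.F R.G)

/-- Multiplication of the Rees matrix semigroup with zero. -/
def mul0 (S : Sgpd O A) (R : Data0 S I Λ) :
    Carrier0 S R → Carrier0 S R → Carrier0 S R
  | some ⟨(i, x, lam), hx⟩, some ⟨(j, y, mu), hy⟩ =>
    match hp : R.P lam j with
    | some p => some ⟨(i, S.mul (S.mul x p) y, mu),
        prod_valid S hx hy (R.P_src lam j p hp) (R.P_tgt lam j p hp)⟩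
    | none => none
  | none, _ => none
  | _, none => none

/-- The Rees matrix semigroup with zero `M^0(S; F(I), G(Λ); P)`, as a
one-object semigroupoid (i.e. a semigroup). -/
def pre0 (S : Sgpd O A) (R : Data0 S I Λ) : PreSgpd Unit (Carrier0 S R) where
  src _ := ()
  tgt _ := ()
  mul := mul0 S R

/-- Data for a Rees matrix construction without zero (no zero entries in `P`). -/
structure Data (S : Sgpd O A) (I Λ : Type) where
  F : I → O
  G : Λ → O
  P : Λ → I → A
  F_into : ∀ i, ∃ a : A, S.src a = F i
  F_onto : ∀ a : A, ∃ i, F i = S.src a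
  G_into : ∀ lam, ∃ a : A, S.tgt a = G lam
  G_onto : ∀ a : A, ∃ lam, G lam = S.tgt a
  P_src : ∀ lam i, S.src (P lam i) = G lam
  P_tgt : ∀ lam i, S.tgt (P lam i) = F i

/-- Underlying set of the Rees matrix semigroup without zero. -/
def Carrier (S : Sgpd O A) (R : Data S I Λ) : Type :=
  Triples S R.F R.G

/-- Multiplication of the Rees matrix semigroup without zero. -/
def mul (S : Sgpd O A) (R : Data S I Λ) :
    Carrier S R → Carrier S R → Carrier S R
  | ⟨(i, x, lam), hx⟩, ⟨(j, y, mu), hy⟩ =>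
    ⟨(i, S.mul (S.mul x (R.P lam j)) y, mu),
      prod_valid S hx hy (R.P_src lam j) (R.P_tgt lam j)⟩

/-- The Rees matrix semigroup without zero `M(S; F(I), G(Λ); P)`, as a
one-object semigroupoid (i.e. a semigroup). -/
def pre (S : Sgpd O A) (R : Data S I Λ) : PreSgpd Unit (Carrier S R) where
  src _ := ()
  tgt _ := ()
  mul := mul S R

/-- The set `S P' S` of arrows of the form `s p t` with `p` a non-zero entry of `P`. -/
def SPS0 (S : Sgpd O A) (R : Data0 S I Λ) : Set A :=
  { a | ∃ s p t lam i, R.P lam i = some p ∧ S.tgt s = S.src p ∧ S.tgt p = S.src t ∧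
        a = S.mul (S.mul s p) t }

/-- The set `S P S` for a matrix without zero entries. -/
def SPS (S : Sgpd O A) (R : Data S I Λ) : Set A :=
  { a | ∃ s t lam i, S.tgt s = S.src (R.P lam i) ∧ S.tgt (R.P lam i) = S.src t ∧
        a = S.mul (S.mul s (R.P lam i)) t }

/-- The set of targets of arrows of `S` (the codomain of `G`). -/
def tgtSet (S : Sgpd O A) : Set O := { v | ∃ a : A, S.tgt a = v }

/-- `T` is strongly right-ideal-generated by a row cross-section of `P`. -/
def StronglyRIG0 (S : Sgpd O A) (R : Data0 S I Λ) (T : Set A) : Prop :=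
  ∃ Λ' : Set Λ, Set.BijOn R.G Λ' (tgtSet S) ∧
    ∀ t ∈ T, ∃ lam ∈ Λ', ∃ i p s, R.P lam i = some p ∧ S.tgt p = S.src s ∧
      t = S.mul p s

/-- `T` is weakly right-ideal-generated by a row cross-section of `P`. -/
def WeaklyRIG0 (S : Sgpd O A) (R : Data0 S I Λ) (T : Set A) : Prop :=
  ∃ Λ' : Set Λ, Set.BijOn R.G Λ' (tgtSet S) ∧
    ∀ t ∈ T, ∃ lam ∈ Λ', ∃ i p, R.P lam i = some p ∧
      (t = p ∨ ∃ s, S.tgt p = S.src s ∧ t = S.mul p s)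

/-- Weak right-ideal generation, for a matrix without zero entries. -/
def WeaklyRIG (S : Sgpd O A) (R : Data S I Λ) (T : Set A) : Prop :=
  ∃ Λ' : Set Λ, Set.BijOn R.G Λ' (tgtSet S) ∧
    ∀ t ∈ T, ∃ lam ∈ Λ', ∃ i,
      (t = R.P lam i ∨ ∃ s, S.tgt (R.P lam i) = S.src s ∧ t = S.mul (R.P lam i) s)

end Rees



/-! ### Auxiliary development for Theorem 4.2 -/

section WordLemmas

variable {O A : Type} (T : Sgpd O A)

theorem aux_chain_cons' {α : Type} {R : α → α → Prop} {a : α} {l : List α} :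
    List.Chain' R (a :: l) ↔ (∀ h ∈ l.head?, R a h) ∧ List.Chain' R l :=
  List.isChain_cons

theorem aux_chain_shift {a x : A} {l : List A}
    (h : IsPathChain T.src T.tgt (a :: x :: l)) :
    IsPathChain T.src T.tgt (T.mul a x :: l) := by
  rcases (aux_chain_cons').1 h with ⟨-, h2⟩
  rcases (aux_chain_cons').1 h2 with ⟨hhead, h3⟩
  refine (aux_chain_cons').2 ⟨?_, h3⟩
  intro y hy
  have hax : T.tgt a = T.src x := by
    have := (aux_chain_cons').1 h
    exact this.1 x rfl
  rw [T.tgt_mul a x hax]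
  exact hhead y hy

theorem aux_chain_rel {a x : A} {l : List A}
    (h : IsPathChain T.src T.tgt (a :: x :: l)) : T.tgt a = T.src x :=
  ((aux_chain_cons').1 h).1 x rfl

theorem aux_chain_tail {a : A} {l : List A}
    (h : IsPathChain T.src T.tgt (a :: l)) : IsPathChain T.src T.tgt l :=
  ((aux_chain_cons').1 h).2

theorem aux_src_foldl : ∀ {l : List A} {a : A},
    IsPathChain T.src T.tgt (a :: l) → T.src (l.foldl T.mul a) = T.src a
  | [], a, _ => rfl
  | x :: l, a, h => by
    have hax : T.tgt a = T.src x := aux_chain_rel T h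
    have := aux_src_foldl (l := l) (a := T.mul a x)
      (aux_chain_shift T h)
    rw [List.foldl_cons] at *
    rw [this, T.src_mul a x hax]

theorem aux_tgt_foldl : ∀ {l : List A} {a : A},
    IsPathChain T.src T.tgt (a :: l) → T.tgt (l.foldl T.mul a) = T.tgt (l.getLastD a)
  | [], a, _ => rfl
  | x :: l, a, h => by
    have hax : T.tgt a = T.src x := aux_chain_rel T h
    have h2 := aux_tgt_foldl (l := l) (a := T.mul a x) (aux_chain_shift T h)
    rw [List.foldl_cons, h2]
    cases l with
    | nil => simpa using T.tgt_mul a x hax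
    | cons y l => rfl

theorem aux_foldl_mul : ∀ {l : List A} {x a : A},
    IsPathChain T.src T.tgt (x :: l) → T.tgt a = T.src x →
    l.foldl T.mul (T.mul a x) = T.mul a (l.foldl T.mul x)
  | [], x, a, _, _ => rfl
  | y :: l, x, a, h, hax => by
    have hxy : T.tgt x = T.src y := aux_chain_rel T h
    have hsh : IsPathChain T.src T.tgt (T.mul x y :: l) := aux_chain_shift T h
    have hax' : T.tgt a = T.src (T.mul x y) := by rw [T.src_mul x y hxy]; exact hax
    calc (y :: l).foldl T.mul (T.mul a x)
        = l.foldl T.mul (T.mul (T.mul a x) y) := rfl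
      _ = l.foldl T.mul (T.mul a (T.mul x y)) := by rw [T.mul_assoc' a x y hax hxy]
      _ = T.mul a (l.foldl T.mul (T.mul x y)) := aux_foldl_mul hsh hax'
      _ = T.mul a ((y :: l).foldl T.mul x) := rfl

theorem aux_chain_append_junction {a x : A} {l₁ l₂ : List A}
    (h : IsPathChain T.src T.tgt (a :: l₁ ++ x :: l₂)) :
    IsPathChain T.src T.tgt (a :: l₁) ∧ IsPathChain T.src T.tgt (x :: l₂) ∧
      T.tgt (l₁.getLastD a) = T.src x := by
  have h' := (List.isChain_append (l₁ := a :: l₁) (l₂ := x :: l₂)).1 h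
  refine ⟨h'.1, h'.2.1, ?_⟩
  have hmem : l₁.getLastD a ∈ (a :: l₁).getLast? := by
    rw [List.getLast?_eq_getLast (by simp), List.getLast_eq_getLastD]
    rfl
  exact h'.2.2 _ hmem x rfl

theorem aux_foldl_split {a x : A} {l₁ l₂ : List A}
    (h : IsPathChain T.src T.tgt (a :: l₁ ++ x :: l₂)) :
    (l₁ ++ x :: l₂).foldl T.mul a = T.mul (l₁.foldl T.mul a) (l₂.foldl T.mul x) := by
  obtain ⟨h1, h2, h3⟩ := aux_chain_append_junction T h
  rw [List.foldl_append, List.foldl_cons]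
  exact aux_foldl_mul T h2 (by rw [aux_tgt_foldl T h1]; exact h3)

/-- Generation of an arrow by a set, via composable words. -/
def GenBy (P : PreSgpd O A) (B : Set A) (a : A) : Prop :=
  ∃ l : List A, l ≠ [] ∧ (∀ x ∈ l, x ∈ B) ∧ IsPathChain P.src P.tgt l ∧
    evalPath? P id l = some a

theorem aux_evalPath_eq (P : PreSgpd O A) (e : A) (l : List A) :
    evalPath? P id (e :: l) = some (l.foldl P.mul e) := by
  simp [evalPath?]

theorem aux_isFG_iff (P : PreSgpd O A) :
    IsFG P ↔ ∃ B : Set A, B.Finite ∧ ∀ a : A, GenBy P B a := by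
  constructor
  · rintro ⟨B, hB, h⟩
    exact ⟨B, hB, fun a => by
      obtain ⟨l, h1, h2, h3, h4⟩ := h a; exact ⟨l, h1, h2, h3, h4⟩⟩
  · rintro ⟨B, hB, h⟩
    exact ⟨B, hB, fun a => by
      obtain ⟨l, h1, h2, h3, h4⟩ := h a; exact ⟨l, h1, h2, h3, h4⟩⟩

theorem genBy_single {P : PreSgpd O A} {B : Set A} {a : A} (h : a ∈ B) :
    GenBy P B a := by
  refine ⟨[a], by simp, by simpa using h, by simp [IsPathChain, List.Chain'], ?_⟩
  simp [evalPath?]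

theorem genBy_mono {P : PreSgpd O A} {B B' : Set A} (hBB : B ⊆ B') {a : A}
    (h : GenBy P B a) : GenBy P B' a := by
  obtain ⟨l, h1, h2, h3, h4⟩ := h
  exact ⟨l, h1, fun x hx => hBB (h2 x hx), h3, h4⟩

theorem genBy_word {B : Set A} {l : List A} (hne : l ≠ [])
    (hB : ∀ x ∈ l, x ∈ B) (hch : IsPathChain T.src T.tgt l) :
    ∀ {a : A}, evalPath? T.toPreSgpd id l = some a → GenBy T.toPreSgpd B a :=
  fun h => ⟨l, hne, hB, hch, h⟩

theorem genBy_mul {B : Set A} {u v : A} (hu : GenBy T.toPreSgpd B u)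
    (hv : GenBy T.toPreSgpd B v) (huv : T.tgt u = T.src v) :
    GenBy T.toPreSgpd B (T.mul u v) := by
  obtain ⟨l₁, h1, h2, h3, h4⟩ := hu
  obtain ⟨l₂, g1, g2, g3, g4⟩ := hv
  obtain ⟨a, l₁', rfl⟩ := List.exists_cons_of_ne_nil h1
  obtain ⟨x, l₂', rfl⟩ := List.exists_cons_of_ne_nil g1
  rw [aux_evalPath_eq] at h4 g4
  have hu' : u = l₁'.foldl T.mul a := by injection h4.symm
  have hv' : v = l₂'.foldl T.mul x := by injection g4.symm
  have hch : IsPathChain T.src T.tgt (a :: l₁' ++ x :: l₂') := by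
    show List.IsChain (fun e f => T.tgt e = T.src f) ((a :: l₁') ++ (x :: l₂'))
    rw [List.isChain_append]
    refine ⟨h3, g3, ?_⟩
    intro p hp q hq
    simp only [List.head?_cons, Option.mem_def, Option.some.injEq] at hq
    rw [List.getLast?_eq_getLast (by simp), Option.mem_def,
      Option.some.injEq, List.getLast_eq_getLastD] at hp
    subst hp; subst hq
    rw [← aux_tgt_foldl T h3, ← hu', huv, hv', aux_src_foldl T g3]
  refine ⟨a :: l₁' ++ x :: l₂', by simp, ?_, hch, ?_⟩
  · intro y hy
    rcases List.mem_append.1 (show y ∈ (a :: l₁') ++ (x :: l₂') from hy)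
      with hy' | hy'
    · exact h2 y hy'
    · exact g2 y hy'
  · rw [show a :: l₁' ++ x :: l₂' = a :: (l₁' ++ x :: l₂') from rfl,
      aux_evalPath_eq, aux_foldl_split T hch, ← hu', ← hv']

end WordLemmas


section Cofinite

variable {O A : Type}

/-- Product of a non-empty list (junk value on the empty list). -/
def nprod (T : Sgpd O A) [Inhabited A] (m : List A) : A :=
  m.tail.foldl T.mul m.headI

theorem nprod_cons (T : Sgpd O A) [Inhabited A] (a : A) (l : List A) :
    nprod T (a :: l) = l.foldl T.mul a := rfl

theorem nprod_src (T : Sgpd O A) [Inhabited A] {a : A} {l : List A}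
    (h : IsPathChain T.src T.tgt (a :: l)) :
    T.src (nprod T (a :: l)) = T.src a := aux_src_foldl T h

/-- A cofinite subset of a finitely generated semigroupoid is generated by a
finite subset of itself. -/
theorem cofinite_genBy (T : Sgpd O A) (hfg : IsFG T.toPreSgpd) (U : Set A)
    (hU : {a : A | a ∉ U}.Finite) :
    ∃ B : Set A, B.Finite ∧ B ⊆ U ∧ ∀ u ∈ U, GenBy T.toPreSgpd B u := by
  classical
  obtain ⟨Tg, hTgfin, hgen⟩ := (aux_isFG_iff T.toPreSgpd).1 hfg
  set C : Set A := {a : A | a ∉ U} with hC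
  set B₁ : Set A := Tg ∪ Set.image2 T.mul Tg C with hB₁
  set B : Set A := U ∩ (B₁ ∪ Set.image2 T.mul C B₁) with hBdef
  have hB₁fin : B₁.Finite := hTgfin.union (Set.Finite.image2 _ hTgfin hU)
  refine ⟨B, Set.Finite.subset (hB₁fin.union (Set.Finite.image2 _ hU hB₁fin))
    Set.inter_subset_right, Set.inter_subset_left, ?_⟩
  intro u hu
  letI : Inhabited A := ⟨u⟩
  have key : ∀ n : ℕ, ∀ m : List A, m.length ≤ n → m ≠ [] →
      (∀ x ∈ m, x ∈ Tg) → IsPathChain T.src T.tgt m → nprod T m ∈ U →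
      GenBy T.toPreSgpd B (nprod T m) := by
    intro n
    induction n with
    | zero =>
      intro m hlen hne
      exact absurd (List.length_eq_zero_iff.1 (Nat.le_zero.1 hlen)) hne
    | succ n IH =>
      intro m hlen hne hTg hch hmem
      have hmpos : 0 < m.length := List.length_pos_iff.2 hne
      set j := Nat.findGreatest (fun j => nprod T (m.drop j) ∈ U) (m.length - 1)
        with hjdef
      have hjle : j ≤ m.length - 1 := Nat.findGreatest_le _
      have hjlt : j < m.length := by omega
      have hPj : nprod T (m.drop j) ∈ U :=
        Nat.findGreatest_spec (P := fun j => nprod T (m.drop j) ∈ U)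
          (Nat.zero_le _) (by simpa using hmem)
      have hdropne : m.drop j ≠ [] := by
        apply List.ne_nil_of_length_pos
        rw [List.length_drop]; omega
      have hdecomp : m.drop j = m[j] :: m.drop (j + 1) :=
        List.drop_eq_getElem_cons hjlt
      have hchdrop : IsPathChain T.src T.tgt (m.drop j) := List.IsChain.drop hch j
      have hsB₁ : nprod T (m.drop j) ∈ B₁ := by
        by_cases hj1 : j + 1 < m.length
        · have htailne : m.drop (j + 1) ≠ [] := by
            apply List.ne_nil_of_length_pos
            rw [List.length_drop]; omega
          have hnotU : nprod T (m.drop (j + 1)) ∉ U :=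
            Nat.findGreatest_is_greatest (hjdef ▸ lt_add_one j) (by omega)
          obtain ⟨y, t, ht⟩ := List.exists_cons_of_ne_nil htailne
          have hchd : IsPathChain T.src T.tgt (m[j] :: y :: t) := by
            rw [← ht, ← hdecomp]; exact hchdrop
          have hform : nprod T (m.drop j) = T.mul m[j] (nprod T (m.drop (j + 1))) := by
            rw [hdecomp, ht, nprod_cons, nprod_cons, List.foldl_cons]
            exact aux_foldl_mul T (aux_chain_tail T hchd) (aux_chain_rel T hchd)
          rw [hform]
          exact Or.inr ⟨m[j], hTg _ (List.getElem_mem hjlt),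
            nprod T (m.drop (j + 1)), hnotU, rfl⟩
        · have htail : m.drop (j + 1) = [] := by
            apply List.eq_nil_of_length_eq_zero
            rw [List.length_drop]; omega
          rw [hdecomp, htail]
          exact Or.inl (hTg _ (List.getElem_mem hjlt))
      have hsB : nprod T (m.drop j) ∈ B := ⟨hPj, Or.inl hsB₁⟩
      by_cases hj0 : j = 0
      · have : m.drop j = m := by rw [hj0, List.drop_zero]
        rw [← this]
        exact genBy_single hsB
      · have htakene : m.take j ≠ [] := by
          apply List.ne_nil_of_length_pos
          rw [List.length_take]; omega
        obtain ⟨a', l₁', he1⟩ := List.exists_cons_of_ne_nil htakene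
        obtain ⟨x', l₂', he2⟩ := List.exists_cons_of_ne_nil hdropne
        have hmsplit : m = a' :: l₁' ++ x' :: l₂' := by
          conv_lhs => rw [← List.take_append_drop j m]
          rw [he1, he2]
        have hch' : IsPathChain T.src T.tgt (a' :: l₁' ++ x' :: l₂') := by
          rw [← hmsplit]; exact hch
        obtain ⟨hchTake, hchDrop, hjunc⟩ := aux_chain_append_junction T hch'
        have husplit : nprod T m = T.mul (nprod T (m.take j)) (nprod T (m.drop j)) := by
          rw [he1, he2, nprod_cons, nprod_cons]
          have hnm : nprod T m = (l₁' ++ x' :: l₂').foldl T.mul a' := by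
            rw [hmsplit, List.cons_append, nprod_cons]
          rw [hnm]
          exact aux_foldl_split T hch'
        have htgtsrc : T.tgt (nprod T (m.take j)) = T.src (nprod T (m.drop j)) := by
          rw [he1, he2, nprod_cons, nprod_cons, aux_tgt_foldl T hchTake,
            aux_src_foldl T hchDrop]
          exact hjunc
        by_cases hq : nprod T (m.take j) ∈ U
        · have hgq : GenBy T.toPreSgpd B (nprod T (m.take j)) := by
            apply IH (m.take j) _ htakene
            · intro x hx; exact hTg x (List.take_subset j m hx)
            · exact List.IsChain.take hch j
            · exact hq
            · rw [List.length_take]; omega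
          rw [husplit]
          exact genBy_mul T hgq (genBy_single hsB) htgtsrc
        · have : nprod T m ∈ Set.image2 T.mul C B₁ :=
            ⟨_, hq, _, hsB₁, husplit.symm⟩
          exact genBy_single ⟨hmem, Or.inr this⟩
  obtain ⟨l, hlne, hlTg, hlch, hleval⟩ := hgen u
  obtain ⟨a, l', rfl⟩ := List.exists_cons_of_ne_nil hlne
  rw [aux_evalPath_eq] at hleval
  have hu' : u = nprod T (a :: l') := by
    rw [nprod_cons]; exact (Option.some.injEq _ _ ▸ hleval).symm
  rw [hu']
  exact key (a :: l').length _ le_rfl hlne hlTg hlch (hu' ▸ hu)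

end Cofinite


section ReesAux

open Rees

variable {O A I Λ : Type} {S : Sgpd O A} {R : Rees.Data0 S I Λ}

theorem mul0_none_left (x : Carrier0 S R) : mul0 S R none x = none := by
  cases x <;> rfl

theorem mul0_none_right (x : Carrier0 S R) : mul0 S R x none = none := by
  cases x <;> rfl

theorem mul0_some_eq {i : I} {x : A} {lam : Λ} {j : I} {y : A} {mu : Λ}
    {hx : Valid S R.F R.G (i, x, lam)} {hy : Valid S R.F R.G (j, y, mu)}
    {p : A} (hp : R.P lam j = some p) :
    mul0 S R (some ⟨(i, x, lam), hx⟩) (some ⟨(j, y, mu), hy⟩) =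
      some ⟨(i, S.mul (S.mul x p) y, mu),
        prod_valid S hx hy (R.P_src lam j p hp) (R.P_tgt lam j p hp)⟩ := by
  unfold Rees.mul0
  dsimp only
  split
  · rename_i p' heq
    rw [hp] at heq
    obtain rfl : p = p' := by injection heq
    rfl
  · rename_i heq
    rw [hp] at heq
    exact absurd heq (by simp)

theorem mul0_zero_eq {i : I} {x : A} {lam : Λ} {j : I} {y : A} {mu : Λ}
    {hx : Valid S R.F R.G (i, x, lam)} {hy : Valid S R.F R.G (j, y, mu)}
    (hp : R.P lam j = none) :
    mul0 S R (some ⟨(i, x, lam), hx⟩) (some ⟨(j, y, mu), hy⟩) = none := by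
  unfold Rees.mul0
  dsimp only
  split
  · rename_i p' heq
    rw [hp] at heq
    exact absurd heq (by simp)
  · rfl

theorem mul0_assoc (a b c : Carrier0 S R) :
    mul0 S R (mul0 S R a b) c = mul0 S R a (mul0 S R b c) := by
  cases a with
  | none => rfl
  | some ta =>
    cases b with
    | none => rfl
    | some tb =>
      cases c with
      | none => cases (mul0 S R (some ta) (some tb)) <;> rfl
      | some tc =>
        obtain ⟨⟨i, x, lam⟩, hx⟩ := ta
        obtain ⟨⟨j, y, mu⟩, hy⟩ := tb
        obtain ⟨⟨k, z, nu⟩, hz⟩ := tc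
        rcases hP : R.P lam j with _ | p
        · erw [mul0_zero_eq hP, mul0_none_left]
          rcases hQ : R.P mu k with _ | q
          · erw [mul0_zero_eq hQ, mul0_none_right]
          · rw [mul0_some_eq hQ, mul0_zero_eq hP]
        · rcases hQ : R.P mu k with _ | q
          · erw [mul0_some_eq hP, mul0_zero_eq hQ, mul0_zero_eq hQ, mul0_none_right]
          · rw [mul0_some_eq hP, mul0_some_eq hQ, mul0_some_eq hQ, mul0_some_eq hP]
            have hxp : S.tgt x = S.src p := by
              rw [R.P_src lam j p hP]; exact hx.2
            have hpy : S.tgt p = S.src y := by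
              rw [R.P_tgt lam j p hP]; exact hy.1.symm ▸ rfl
            have hyq : S.tgt y = S.src q := by
              rw [R.P_src mu k q hQ]; exact hy.2
            have hqz : S.tgt q = S.src z := by
              rw [R.P_tgt mu k q hQ]; exact hz.1.symm ▸ rfl
            have hu : S.tgt (S.mul x p) = S.src y := by
              rw [S.tgt_mul x p hxp]; exact hpy
            have huy : S.tgt (S.mul (S.mul x p) y) = S.src q := by
              rw [S.tgt_mul _ y hu]; exact hyq
            refine Option.some_inj.2 (Subtype.ext ?_)
            show (i, S.mul (S.mul (S.mul (S.mul x p) y) q) z, nu) =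
              (i, S.mul (S.mul x p) (S.mul (S.mul y q) z), nu)
            have e1 : S.mul (S.mul (S.mul (S.mul x p) y) q) z =
                S.mul (S.mul (S.mul x p) y) (S.mul q z) :=
              S.mul_assoc' _ q z huy hqz
            have e2 : S.mul (S.mul (S.mul x p) y) (S.mul q z) =
                S.mul (S.mul x p) (S.mul y (S.mul q z)) :=
              S.mul_assoc' _ y _ hu (by rw [S.src_mul q z hqz]; exact hyq)
            have e3 : S.mul y (S.mul q z) = S.mul (S.mul y q) z :=
              (S.mul_assoc' y q z hyq hqz).symm
            rw [e1, e2, e3]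

instance : Std.Associative (mul0 S R) := ⟨mul0_assoc⟩

theorem foldl_mul0_none (l : List (Carrier0 S R)) :
    List.foldl (mul0 S R) none l = none := by
  induction l with
  | nil => rfl
  | cons x l ih => erw [List.foldl_cons, mul0_none_left]; exact ih

end ReesAux


section ReesInv

open Rees

variable {O A I Λ : Type} {S : Sgpd O A} {R : Rees.Data0 S I Λ}

/-- The set of non-zero entries of the sandwich matrix. -/
def entrySet (S : Sgpd O A) (R : Rees.Data0 S I Λ) : Set A :=
  {p | ∃ lam i, R.P lam i = some p}

theorem mul0_some_inv {g x : Carrier0 S R} {td : Triples S R.F R.G}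
    (h : mul0 S R g x = some td) :
    ∃ (tg tx : Triples S R.F R.G) (p : A), g = some tg ∧ x = some tx ∧
      R.P tg.1.2.2 tx.1.1 = some p ∧
      td.1 = (tg.1.1, S.mul (S.mul tg.1.2.1 p) tx.1.2.1, tx.1.2.2) := by
  cases g with
  | none => rw [mul0_none_left] at h; exact absurd h (by simp)
  | some tg =>
    cases x with
    | none => erw [mul0_none_right] at h; exact absurd h (by simp)
    | some tx =>
      obtain ⟨⟨i, x', lam⟩, hx⟩ := tg
      obtain ⟨⟨j, y, mu⟩, hy⟩ := tx
      rcases hP : R.P lam j with _ | p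
      · rw [mul0_zero_eq hP] at h; exact absurd h (by simp)
      · rw [mul0_some_eq hP] at h
        injection h with h'
        subst h'
        exact ⟨_, _, p, rfl, rfl, hP, rfl⟩

theorem foldl_mul0_fst : ∀ (l : List (Carrier0 S R)) (g : Carrier0 S R)
    (trip : Triples S R.F R.G), List.foldl (mul0 S R) g l = some trip →
    ∃ tg, g = some tg ∧ tg.1.1 = trip.1.1
  | [], _, trip, h => ⟨trip, h, rfl⟩
  | x :: l, g, trip, h => by
    obtain ⟨td, hd, hfst⟩ := foldl_mul0_fst l (mul0 S R g x) trip h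
    obtain ⟨tg, tx, p, hg, hx, hP, hmid⟩ := mul0_some_inv hd
    exact ⟨tg, hg, by rw [← hfst, hmid]⟩

theorem foldl_mul0_last : ∀ (l : List (Carrier0 S R)) (g : Carrier0 S R)
    (trip : Triples S R.F R.G), List.foldl (mul0 S R) g l = some trip →
    ∃ te, l.getLastD g = some te ∧ te.1.2.2 = trip.1.2.2
  | [], _, trip, h => ⟨trip, h, rfl⟩
  | x :: l, g, trip, h => by
    obtain ⟨te, he, hlast⟩ := foldl_mul0_last l (mul0 S R g x) trip h
    cases l with
    | nil =>
      obtain ⟨tg, tx, p, hg, hx, hP, hmid⟩ := mul0_some_inv he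
      refine ⟨tx, by simpa using hx, ?_⟩
      rw [← hlast, hmid]
    | cons y l' => exact ⟨te, he, hlast⟩

theorem foldl_mid_genBy (M : Set A) :
    ∀ (l : List (Carrier0 S R)) (t₀ trip : Triples S R.F R.G),
      (∀ x ∈ l, ∃ tx : Triples S R.F R.G, x = some tx ∧ tx.1.2.1 ∈ M) →
      List.foldl (mul0 S R) (some t₀) l = some trip →
      trip = t₀ ∨ ∃ p c : A,
        p ∈ entrySet S R ∧ GenBy S.toPreSgpd (M ∪ entrySet S R) c ∧
        S.tgt t₀.1.2.1 = S.src p ∧ S.tgt p = S.src c ∧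
        trip.1.2.1 = S.mul (S.mul t₀.1.2.1 p) c
  | [], t₀, trip, _, h => Or.inl (by injection h with h'; exact h'.symm)
  | x :: l, t₀, trip, hmem, h => by
    erw [List.foldl_cons] at h
    rcases hmx : mul0 S R (some t₀) x with _ | td
    · rw [hmx, foldl_mul0_none] at h; exact absurd h (by simp)
    rw [hmx] at h
    obtain ⟨tg, tx, p, hg, hx, hP, hmid⟩ := mul0_some_inv hmx
    replace hg : t₀ = tg := by injection hg
    subst hg
    obtain ⟨tx', hx', htxM'⟩ := hmem x (List.mem_cons_self)
    have hx'' : tx' = tx := by rw [hx] at hx'; injection hx' with h'; exact h'.symm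
    have htxM : tx.1.2.1 ∈ M := by rwa [hx''] at htxM'
    have hpe : p ∈ entrySet S R := ⟨_, _, hP⟩
    -- basic composability facts
    have htp : S.tgt t₀.1.2.1 = S.src p := by
      rw [R.P_src _ _ _ hP]; exact t₀.2.2
    have hptx : S.tgt p = S.src tx.1.2.1 := by
      rw [R.P_tgt _ _ _ hP]; exact tx.2.1
    rcases foldl_mid_genBy M l td trip (fun z hz => hmem z (List.mem_cons_of_mem x hz)) h with
      heq | ⟨q, c, hqe, hcgen, htdq, hqc, hdec⟩
    · subst heq
      refine Or.inr ⟨p, tx.1.2.1, hpe, genBy_single (Or.inl htxM), htp, hptx, ?_⟩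
      rw [hmid]
    · -- trip.1.2.1 = ((t₀ p tx) q) c; regroup as (t₀ p) (tx q c)
      have htdmid : trip.1.2.1 =
          S.mul (S.mul (S.mul (S.mul t₀.1.2.1 p) tx.1.2.1) q) c := by
        rw [hdec, hmid]
      have htd_tx : S.tgt td.1.2.1 = S.tgt tx.1.2.1 := by
        rw [td.2.2, tx.2.2, show td.1.2.2 = tx.1.2.2 from by rw [hmid]]
      have htxq : S.tgt tx.1.2.1 = S.src q := by rw [← htd_tx]; exact htdq
      have htP0x : S.tgt (S.mul t₀.1.2.1 p) = S.src tx.1.2.1 := by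
        rw [S.tgt_mul _ _ htp]; exact hptx
      refine Or.inr ⟨p, S.mul (S.mul tx.1.2.1 q) c, hpe,
        genBy_mul S (genBy_mul S (genBy_single (Or.inl htxM))
          (genBy_single (Or.inr hqe)) htxq) hcgen
          (by rw [S.tgt_mul _ _ htxq]; exact hqc), htp, ?_, ?_⟩
      · rw [S.src_mul _ c (by rw [S.tgt_mul _ _ htxq]; exact hqc),
          S.src_mul _ _ htxq]
        exact hptx
      · rw [htdmid]
        have e1 : S.mul (S.mul (S.mul (S.mul t₀.1.2.1 p) tx.1.2.1) q) c =
            S.mul (S.mul (S.mul t₀.1.2.1 p) tx.1.2.1) (S.mul q c) :=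
          S.mul_assoc' _ q c (by rw [S.tgt_mul _ _ htP0x]; exact htxq) hqc
        have e2 : S.mul (S.mul (S.mul t₀.1.2.1 p) tx.1.2.1) (S.mul q c) =
            S.mul (S.mul t₀.1.2.1 p) (S.mul tx.1.2.1 (S.mul q c)) :=
          S.mul_assoc' _ tx.1.2.1 _ htP0x (by rw [S.src_mul q c hqc]; exact htxq)
        have e3 : S.mul tx.1.2.1 (S.mul q c) = S.mul (S.mul tx.1.2.1 q) c :=
          (S.mul_assoc' tx.1.2.1 q c htxq hqc).symm
        rw [e1, e2, e3]

end ReesInv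


section Necessity

open Rees

variable {O A I Λ : Type} {S : Sgpd O A} {R : Rees.Data0 S I Λ}

theorem foldl_mul0_some_letters : ∀ (l : List (Carrier0 S R))
    (g : Carrier0 S R) (trip : Triples S R.F R.G),
    List.foldl (mul0 S R) g l = some trip →
    ∀ x ∈ l, ∃ tx : Triples S R.F R.G, x = some tx
  | [], _, _, _, _, hx => absurd hx List.not_mem_nil
  | x :: l, g, trip, h, z, hz => by
    rw [List.foldl_cons] at h
    rcases List.mem_cons.1 hz with rfl | hz'
    · cases z with
      | none =>
        rw [mul0_none_right, foldl_mul0_none] at h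
        exact absurd h (by simp)
      | some tz => exact ⟨tz, rfl⟩
    · exact foldl_mul0_some_letters l (mul0 S R g x) trip h z hz'

/-- Extract the word equation from finite generation of `pre0`. -/
theorem pre0_word {X : Set (Rees.Carrier0 S R)}
    (hgen : ∀ m : Rees.Carrier0 S R, ∃ l : List (Rees.Carrier0 S R),
      l ≠ [] ∧ (∀ x ∈ l, x ∈ X) ∧ IsPathChain (Rees.pre0 S R).src (Rees.pre0 S R).tgt l ∧
      evalPath? (Rees.pre0 S R) id l = some m)
    (trip : Rees.Triples S R.F R.G) :
    ∃ (e : Rees.Carrier0 S R) (l : List (Rees.Carrier0 S R)),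
      (∀ x ∈ e :: l, x ∈ X) ∧ List.foldl (mul0 S R) e l = some trip := by
  obtain ⟨l, hne, hmem, _, heval⟩ := hgen (some trip)
  obtain ⟨e, l', rfl⟩ := List.exists_cons_of_ne_nil hne
  rw [aux_evalPath_eq] at heval
  refine ⟨e, l', hmem, ?_⟩
  injection heval

theorem fg0_necessary (S : Sgpd O A) (R : Rees.Data0 S I Λ)
    (hfg : IsFG (Rees.pre0 S R)) :
    Finite I ∧ Finite Λ ∧ IsFG S.toPreSgpd ∧ {a : A | a ∉ Rees.SPS0 S R}.Finite := by
  obtain ⟨X, hXfin, hXgen⟩ := hfg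
  have hword := pre0_word (R := R) hXgen
  have hTfin : {t : Triples S R.F R.G | some t ∈ X}.Finite :=
    hXfin.preimage ((Option.some_injective _).injOn)
  set mids : Set A := (fun t : Triples S R.F R.G => t.1.2.1) '' {t | some t ∈ X}
    with hmids
  have hmidsfin : mids.Finite := hTfin.image _
  -- Finiteness of I
  have hI : Finite I := by
    rw [← Set.finite_univ_iff]
    apply Set.Finite.subset (hTfin.image (fun t : Triples S R.F R.G => t.1.1))
    rintro i -
    obtain ⟨a, ha⟩ := R.F_into i
    obtain ⟨lam, hlam⟩ := R.G_onto a
    obtain ⟨e, l, hmem, hfold⟩ := hword ⟨(i, a, lam), ha.symm, hlam.symm⟩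
    obtain ⟨tg, he, hfst⟩ := foldl_mul0_fst l e _ hfold
    refine ⟨tg, ?_, hfst⟩
    have := hmem e (List.mem_cons_self)
    rwa [he] at this
  -- Finiteness of Λ
  have hΛ : Finite Λ := by
    rw [← Set.finite_univ_iff]
    apply Set.Finite.subset (hTfin.image (fun t : Triples S R.F R.G => t.1.2.2))
    rintro lam -
    obtain ⟨a, ha⟩ := R.G_into lam
    obtain ⟨i, hi⟩ := R.F_onto a
    obtain ⟨e, l, hmem, hfold⟩ := hword ⟨(i, a, lam), hi, ha.symm ▸ rfl⟩
    obtain ⟨te, he, hlast⟩ := foldl_mul0_last l e _ hfold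
    refine ⟨te, ?_, hlast⟩
    have := hmem _ List.getLastD_mem_cons
    rwa [he] at this
  -- decomposition of an arbitrary arrow
  have hdec : ∀ a : A, (a ∈ mids) ∨ ∃ s p c : A,
      s ∈ mids ∧ p ∈ entrySet S R ∧ GenBy S.toPreSgpd (mids ∪ entrySet S R) c ∧
      S.tgt s = S.src p ∧ S.tgt p = S.src c ∧ a = S.mul (S.mul s p) c := by
    intro a
    obtain ⟨i, hi⟩ := R.F_onto a
    obtain ⟨lam, hlam⟩ := R.G_onto a
    obtain ⟨e, l, hmem, hfold⟩ := hword ⟨(i, a, lam), hi, hlam.symm ▸ rfl⟩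
    obtain ⟨t₁, rfl, -⟩ := foldl_mul0_fst l e _ hfold
    have ht₁X : t₁.1.2.1 ∈ mids := ⟨t₁, hmem _ (List.mem_cons_self), rfl⟩
    have hsome : ∀ x ∈ l, ∃ tx : Triples S R.F R.G, x = some tx ∧ tx.1.2.1 ∈ mids := by
      intro x hx
      obtain ⟨tx, rfl⟩ := foldl_mul0_some_letters l _ _ hfold x hx
      exact ⟨tx, rfl, ⟨tx, hmem _ (List.mem_cons_of_mem _ hx), rfl⟩⟩
    rcases foldl_mid_genBy mids l t₁ _ hsome hfold with heq | ⟨p, c, hpe, hcgen, h1, h2, h3⟩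
    · left; rw [show a = t₁.1.2.1 from by rw [← heq]]; exact ht₁X
    · right; exact ⟨t₁.1.2.1, p, c, ht₁X, hpe, hcgen, h1, h2, h3⟩
  -- S is finitely generated
  have hentfin : (entrySet S R).Finite := by
    have : entrySet S R ⊆ some ⁻¹' Set.range (fun q : Λ × I => R.P q.1 q.2) := by
      rintro p ⟨lam, i, hp⟩
      exact Set.mem_preimage.2 ⟨(lam, i), hp⟩
    exact Set.Finite.subset
      ((Set.finite_range _).preimage ((Option.some_injective _).injOn)) this
  have hSfg : IsFG S.toPreSgpd := by
    rw [aux_isFG_iff]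
    refine ⟨mids ∪ entrySet S R, hmidsfin.union hentfin, fun a => ?_⟩
    rcases hdec a with hm | ⟨s, p, c, hs, hpe, hcgen, h1, h2, h3⟩
    · exact genBy_single (Or.inl hm)
    · rw [h3]
      exact genBy_mul S (genBy_mul S (genBy_single (Or.inl hs))
        (genBy_single (Or.inr hpe)) h1) hcgen (by rw [S.tgt_mul _ _ h1]; exact h2)
  refine ⟨hI, hΛ, hSfg, Set.Finite.subset hmidsfin ?_⟩
  intro a ha
  rcases hdec a with hm | ⟨s, p, c, hs, ⟨lam, i, hp⟩, hcgen, h1, h2, h3⟩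
  · exact hm
  · exact absurd ⟨s, p, c, lam, i, hp, h1, h2, h3⟩ ha

end Necessity


section Sufficiency

open Rees

variable {O A I Λ : Type} {S : Sgpd O A} {R : Rees.Data0 S I Λ}

theorem pre0_chain (l : List (Rees.Carrier0 S R)) :
    IsPathChain (Rees.pre0 S R).src (Rees.pre0 S R).tgt l := by
  induction l with
  | nil => exact List.isChain_nil
  | cons x l ih =>
    refine List.isChain_cons.2 ⟨fun y _ => rfl, ih⟩

theorem eval_pre0_cons (g : Rees.Carrier0 S R) (l : List (Rees.Carrier0 S R)) :
    evalPath? (Rees.pre0 S R) id (g :: l) = some (l.foldl (mul0 S R) g) := by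
  simp [evalPath?]
  rfl

theorem fg0_sufficient (S : Sgpd O A) (R : Rees.Data0 S I Λ) (hI : Finite I)
    (hΛ : Finite Λ) (hSfg : IsFG S.toPreSgpd)
    (hcof : {a : A | a ∉ Rees.SPS0 S R}.Finite) : IsFG (Rees.pre0 S R) := by
  classical
  set U : Set A := Rees.SPS0 S R with hUdef
  obtain ⟨B, hBfin, hBU, hBgen⟩ := cofinite_genBy S hSfg U hcof
  haveI : Finite ↥B := hBfin.to_subtype
  -- choice of decompositions of elements of U
  have hUex : ∀ u : ↥U, ∃ s p t : A, ∃ lam : Λ, ∃ i : I,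
      R.P lam i = some p ∧ S.tgt s = S.src p ∧ S.tgt p = S.src t ∧
      (u : A) = S.mul (S.mul s p) t := fun u => u.2
  choose sf pf tf lamf idf hPf hsp hpt hdf using hUex
  set ι : ↥B → ↥U := fun b => ⟨b.1, hBU b.2⟩ with hι
  -- derived composability facts
  have hsrcu : ∀ u : ↥U, S.src (u : A) = S.src (sf u) := by
    intro u
    conv_lhs => rw [hdf u]
    rw [S.src_mul _ _ (by rw [S.tgt_mul _ _ (hsp u)]; exact hpt u),
      S.src_mul _ _ (hsp u)]
  have htgtu : ∀ u : ↥U, S.tgt (u : A) = S.tgt (tf u) := by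
    intro u
    conv_lhs => rw [hdf u]
    rw [S.tgt_mul _ _ (by rw [S.tgt_mul _ _ (hsp u)]; exact hpt u)]
  have hFsrc : ∀ u : ↥U, R.F (idf u) = S.src (tf u) := by
    intro u
    rw [← R.P_tgt _ _ _ (hPf u)]
    exact hpt u
  have hGtgt : ∀ u : ↥U, S.src (pf u) = R.G (lamf u) :=
    fun u => R.P_src _ _ _ (hPf u)
  -- the finite generating set
  set C : Set A := {a : A | a ∉ U} with hCdef
  set Z : Set A := C ∪ Set.range (fun b : ↥B => sf (ι b)) ∪
      Set.range (fun b : ↥B => tf (ι b)) ∪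
      Set.range (fun bb : ↥B × ↥B => S.mul (tf (ι bb.1)) (sf (ι bb.2))) with hZdef
  have hZfin : Z.Finite :=
    ((hcof.union (Set.finite_range _)).union (Set.finite_range _)).union
      (Set.finite_range _)
  set X : Set (Rees.Carrier0 S R) :=
    insert none (some '' {t : Rees.Triples S R.F R.G | t.1.2.1 ∈ Z}) with hXdef
  have hXfin : X.Finite := by
    apply Set.Finite.insert
    apply Set.Finite.image
    have hsub : {t : Rees.Triples S R.F R.G | t.1.2.1 ∈ Z} ⊆
        Subtype.val ⁻¹' ((Set.univ : Set I) ×ˢ Z ×ˢ (Set.univ : Set Λ)) := by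
      intro t ht
      exact ⟨Set.mem_univ _, ht, Set.mem_univ _⟩
    exact Set.Finite.subset
      (((Set.finite_univ.prod (hZfin.prod Set.finite_univ))).preimage
        (Subtype.val_injective.injOn)) hsub
  have hmemX : ∀ (tr : I × A × Λ) (hv : Valid S R.F R.G tr), tr.2.1 ∈ Z →
      (some ⟨tr, hv⟩ : Rees.Carrier0 S R) ∈ X :=
    fun tr hv h => Or.inr ⟨⟨tr, hv⟩, h, rfl⟩
  -- the key induction
  have gen_aux : ∀ (l' : List A) (b : A), b ∈ B → (∀ x ∈ l', x ∈ B) →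
      IsPathChain S.src S.tgt (b :: l') → ∀ (b₀ : ↥B) (μ : Λ),
      S.tgt (tf (ι b₀)) = S.src b → S.tgt (l'.getLastD b) = R.G μ →
      ∀ hv : Valid S R.F R.G (idf (ι b₀), S.mul (tf (ι b₀)) (l'.foldl S.mul b), μ),
      GenBy (Rees.pre0 S R) X (some ⟨_, hv⟩) := by
    intro l'
    induction l' with
    | nil =>
      intro b hb hxl hch b₀ μ hcomp hμ hv
      set u₀ : ↥U := ι b₀
      set ub : ↥U := ι ⟨b, hb⟩ with hub
      have hbu : (ub : A) = b := rfl
      have c1 : S.tgt (tf u₀) = S.src (sf ub) := by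
        rw [hcomp]; exact hsrcu ub
      have c2 : S.tgt (sf ub) = S.src (pf ub) := hsp ub
      have c3 : S.tgt (pf ub) = S.src (tf ub) := hpt ub
      have c4 : S.tgt (S.mul (sf ub) (pf ub)) = S.src (tf ub) := by
        rw [S.tgt_mul _ _ c2]; exact c3
      have v₁ : Valid S R.F R.G (idf u₀, S.mul (tf u₀) (sf ub), lamf ub) := by
        constructor
        · show R.F (idf u₀) = S.src (S.mul (tf u₀) (sf ub))
          rw [S.src_mul _ _ c1]; exact hFsrc u₀
        · show S.tgt (S.mul (tf u₀) (sf ub)) = R.G (lamf ub)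
          rw [S.tgt_mul _ _ c1, c2]; exact hGtgt ub
      have v₂ : Valid S R.F R.G (idf ub, tf ub, μ) := by
        constructor
        · exact hFsrc ub
        · show S.tgt (tf ub) = R.G μ
          rw [← htgtu ub]; exact hμ
      set g₁ : Rees.Carrier0 S R := some ⟨(idf u₀, S.mul (tf u₀) (sf ub), lamf ub), v₁⟩
      set g₂ : Rees.Carrier0 S R := some ⟨(idf ub, tf ub, μ), v₂⟩
      refine ⟨[g₁, g₂], by simp, ?_, pre0_chain _, ?_⟩
      · intro x hx
        rcases List.mem_pair.1 hx with rfl | rfl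
        · exact hmemX _ v₁ (Or.inr ⟨(b₀, ⟨b, hb⟩), rfl⟩)
        · exact hmemX _ v₂ (Or.inl (Or.inr ⟨⟨b, hb⟩, rfl⟩))
      · rw [eval_pre0_cons]
        show some (mul0 S R g₁ g₂) = _
        rw [show mul0 S R g₁ g₂ = some ⟨(idf u₀,
            S.mul (S.mul (S.mul (tf u₀) (sf ub)) (pf ub)) (tf ub), μ),
            prod_valid S v₁ v₂ (R.P_src _ _ _ (hPf ub)) (R.P_tgt _ _ _ (hPf ub))⟩
          from mul0_some_eq (hPf ub)]
        refine Option.some_inj.2 (Option.some_inj.2 (Subtype.ext ?_))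
        show (idf u₀, S.mul (S.mul (S.mul (tf u₀) (sf ub)) (pf ub)) (tf ub), μ)
          = (idf u₀, S.mul (tf u₀) (List.foldl S.mul b []), μ)
        have chase : S.mul (S.mul (S.mul (tf u₀) (sf ub)) (pf ub)) (tf ub)
            = S.mul (tf u₀) b := by
          rw [S.mul_assoc' (tf u₀) (sf ub) (pf ub) c1 c2,
            S.mul_assoc' (tf u₀) _ (tf ub) (by rw [S.src_mul _ _ c2]; exact c1) c4,
            ← hdf ub]
        rw [chase]
        rfl
    | cons y l'' IH =>
      intro b hb hxl hch b₀ μ hcomp hμ hv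
      rw [List.getLastD_cons] at hμ
      set u₀ : ↥U := ι b₀
      set ub : ↥U := ι ⟨b, hb⟩ with hub
      have hbu : (ub : A) = b := rfl
      have hyB : y ∈ B := hxl y (List.mem_cons_self)
      have hchy : IsPathChain S.src S.tgt (y :: l'') := aux_chain_tail S hch
      have hby : S.tgt b = S.src y := aux_chain_rel S hch
      set w' : A := l''.foldl S.mul y with hw'def
      have hw : (y :: l'').foldl S.mul b = S.mul b w' := by
        rw [List.foldl_cons]
        exact aux_foldl_mul S hchy hby
      -- facts
      have c1 : S.tgt (tf u₀) = S.src (sf ub) := by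
        rw [hcomp]; exact hsrcu ub
      have c2 : S.tgt (sf ub) = S.src (pf ub) := hsp ub
      have c3 : S.tgt (pf ub) = S.src (tf ub) := hpt ub
      have c4 : S.tgt (S.mul (sf ub) (pf ub)) = S.src (tf ub) := by
        rw [S.tgt_mul _ _ c2]; exact c3
      have c5 : S.tgt (tf ub) = S.src w' := by
        rw [← htgtu ub, hw'def, aux_src_foldl S hchy]; exact hby
      have v₁ : Valid S R.F R.G (idf u₀, S.mul (tf u₀) (sf ub), lamf ub) := by
        constructor
        · show R.F (idf u₀) = S.src (S.mul (tf u₀) (sf ub))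
          rw [S.src_mul _ _ c1]; exact hFsrc u₀
        · show S.tgt (S.mul (tf u₀) (sf ub)) = R.G (lamf ub)
          rw [S.tgt_mul _ _ c1, c2]; exact hGtgt ub
      have v₂ : Valid S R.F R.G (idf ub, S.mul (tf ub) w', μ) := by
        constructor
        · show R.F (idf ub) = S.src (S.mul (tf ub) w')
          rw [S.src_mul _ _ c5]; exact hFsrc ub
        · show S.tgt (S.mul (tf ub) w') = R.G μ
          rw [S.tgt_mul _ _ c5, hw'def, aux_tgt_foldl S hchy]
          exact hμ
      obtain ⟨w, hwne, hwmem, -, hweval⟩ :=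
        IH y hyB (fun x hx => hxl x (List.mem_cons_of_mem y hx)) hchy ⟨b, hb⟩ μ
          (show S.tgt (tf ub) = S.src y from by rw [← htgtu ub]; exact hby) hμ v₂
      set g₁ : Rees.Carrier0 S R := some ⟨(idf u₀, S.mul (tf u₀) (sf ub), lamf ub), v₁⟩
      obtain ⟨h, t, rfl⟩ := List.exists_cons_of_ne_nil hwne
      rw [eval_pre0_cons] at hweval
      have hwfold : t.foldl (mul0 S R) h = some ⟨(idf ub, S.mul (tf ub) w', μ), v₂⟩ := by
        injection hweval
      refine ⟨g₁ :: h :: t, by simp, ?_, pre0_chain _, ?_⟩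
      · intro x hx
        rcases List.mem_cons.1 hx with rfl | hx'
        · exact hmemX _ v₁ (Or.inr ⟨(b₀, ⟨b, hb⟩), rfl⟩)
        · exact hwmem x hx'
      · rw [eval_pre0_cons]
        show some ((h :: t).foldl (mul0 S R) g₁) = _
        rw [List.foldl_cons, List.foldl_assoc, hwfold]
        rw [show mul0 S R g₁ (some ⟨(idf ub, S.mul (tf ub) w', μ), v₂⟩) =
            some ⟨(idf u₀,
              S.mul (S.mul (S.mul (tf u₀) (sf ub)) (pf ub)) (S.mul (tf ub) w'), μ),
              prod_valid S v₁ v₂ (R.P_src _ _ _ (hPf ub)) (R.P_tgt _ _ _ (hPf ub))⟩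
          from mul0_some_eq (hPf ub)]
        refine Option.some_inj.2 (Option.some_inj.2 (Subtype.ext ?_))
        show (idf u₀, S.mul (S.mul (S.mul (tf u₀) (sf ub)) (pf ub)) (S.mul (tf ub) w'), μ)
          = (idf u₀, S.mul (tf u₀) ((y :: l'').foldl S.mul b), μ)
        have chase : S.mul (S.mul (S.mul (tf u₀) (sf ub)) (pf ub)) (S.mul (tf ub) w')
            = S.mul (tf u₀) (S.mul b w') := by
          rw [S.mul_assoc' (tf u₀) (sf ub) (pf ub) c1 c2,
            S.mul_assoc' (tf u₀) _ (S.mul (tf ub) w')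
              (by rw [S.src_mul _ _ c2]; exact c1)
              (by rw [S.src_mul _ _ c5]; exact c4),
            ← S.mul_assoc' _ (tf ub) w' c4 c5, ← hdf ub]
        rw [chase, hw]
    -- end of gen_aux
  rw [show IsFG (Rees.pre0 S R) ↔ _ from aux_isFG_iff _]
  refine ⟨X, hXfin, ?_⟩
  intro m
  cases m with
  | none =>
    exact ⟨[none], by simp, by intro x hx; obtain rfl := List.mem_singleton.1 hx; exact Set.mem_insert _ _, pre0_chain _, rfl⟩
  | some trip =>
    obtain ⟨⟨i, z, μ⟩, hvz⟩ := trip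
    by_cases hz : z ∈ U
    · obtain ⟨l, hlne, hlB, hlch, hleval⟩ := hBgen z hz
      obtain ⟨b, l', rfl⟩ := List.exists_cons_of_ne_nil hlne
      rw [aux_evalPath_eq] at hleval
      have hfold : l'.foldl S.mul b = z := by injection hleval
      have hb : b ∈ B := hlB b (List.mem_cons_self)
      set ub : ↥U := ι ⟨b, hb⟩ with hub
      have hbu : (ub : A) = b := rfl
      have c2 : S.tgt (sf ub) = S.src (pf ub) := hsp ub
      have c3 : S.tgt (pf ub) = S.src (tf ub) := hpt ub
      have c4 : S.tgt (S.mul (sf ub) (pf ub)) = S.src (tf ub) := by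
        rw [S.tgt_mul _ _ c2]; exact c3
      have v₁ : Valid S R.F R.G (i, sf ub, lamf ub) := by
        constructor
        · show R.F i = S.src (sf ub)
          rw [← hsrcu ub]
          show R.F i = S.src b
          rw [hvz.1, ← hfold]
          exact aux_src_foldl S hlch
        · show S.tgt (sf ub) = R.G (lamf ub)
          rw [hsp ub]; exact hGtgt ub
      cases l' with
      | nil =>
        have v₂ : Valid S R.F R.G (idf ub, tf ub, μ) := by
          constructor
          · exact hFsrc ub
          · show S.tgt (tf ub) = R.G μ
            rw [← htgtu ub]
            show S.tgt b = R.G μ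
            have h2 := hvz.2
            rw [← hfold] at h2
            exact h2
        set g₁ : Rees.Carrier0 S R := some ⟨(i, sf ub, lamf ub), v₁⟩
        set g₂ : Rees.Carrier0 S R := some ⟨(idf ub, tf ub, μ), v₂⟩
        refine ⟨[g₁, g₂], by simp, ?_, pre0_chain _, ?_⟩
        · intro x hx
          rcases List.mem_pair.1 hx with rfl | rfl
          · exact hmemX _ v₁ (Or.inl (Or.inl (Or.inr ⟨⟨b, hb⟩, rfl⟩)))
          · exact hmemX _ v₂ (Or.inl (Or.inr ⟨⟨b, hb⟩, rfl⟩))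
        · rw [eval_pre0_cons]
          show some (mul0 S R g₁ g₂) = _
          rw [show mul0 S R g₁ g₂ = some ⟨(i,
              S.mul (S.mul (sf ub) (pf ub)) (tf ub), μ),
              prod_valid S v₁ v₂ (R.P_src _ _ _ (hPf ub)) (R.P_tgt _ _ _ (hPf ub))⟩
            from mul0_some_eq (hPf ub)]
          refine Option.some_inj.2 (Option.some_inj.2 (Subtype.ext ?_))
          show (i, S.mul (S.mul (sf ub) (pf ub)) (tf ub), μ) = (i, z, μ)
          rw [← hdf ub, ← hfold]
          rfl
      | cons y l'' =>
        have hchy : IsPathChain S.src S.tgt (y :: l'') := aux_chain_tail S hlch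
        have hby : S.tgt b = S.src y := aux_chain_rel S hlch
        have hyB : y ∈ B := hlB y (List.mem_cons_of_mem b (List.mem_cons_self))
        set w' : A := l''.foldl S.mul y with hw'def
        have c5 : S.tgt (tf ub) = S.src w' := by
          rw [← htgtu ub, hw'def, aux_src_foldl S hchy]; exact hby
        have hμ' : S.tgt ((y :: l'').getLastD b) = R.G μ := by
          have h1 : S.tgt ((y :: l'').foldl S.mul b) = R.G μ := by
            rw [hfold]; exact hvz.2
          rw [aux_tgt_foldl S hlch] at h1
          exact h1
        have v₂ : Valid S R.F R.G (idf ub, S.mul (tf ub) w', μ) := by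
          constructor
          · show R.F (idf ub) = S.src (S.mul (tf ub) w')
            rw [S.src_mul _ _ c5]; exact hFsrc ub
          · show S.tgt (S.mul (tf ub) w') = R.G μ
            rw [S.tgt_mul _ _ c5, hw'def, aux_tgt_foldl S hchy]
            rw [← List.getLastD_cons (a := b)]; exact hμ'
        obtain ⟨w, hwne, hwmem, -, hweval⟩ :=
          gen_aux l'' y hyB (fun x hx => hlB x (List.mem_cons_of_mem b
            (List.mem_cons_of_mem y hx))) hchy ⟨b, hb⟩ μ
            (show S.tgt (tf ub) = S.src y from by rw [← htgtu ub]; exact hby) (by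
              rw [← List.getLastD_cons (a := b)]; exact hμ') v₂
        set g₁ : Rees.Carrier0 S R := some ⟨(i, sf ub, lamf ub), v₁⟩
        obtain ⟨h, t, rfl⟩ := List.exists_cons_of_ne_nil hwne
        rw [eval_pre0_cons] at hweval
        have hwfold : t.foldl (mul0 S R) h =
            some ⟨(idf ub, S.mul (tf ub) w', μ), v₂⟩ := by injection hweval
        refine ⟨g₁ :: h :: t, by simp, ?_, pre0_chain _, ?_⟩
        · intro x hx
          rcases List.mem_cons.1 hx with rfl | hx'
          · exact hmemX _ v₁ (Or.inl (Or.inl (Or.inr ⟨⟨b, hb⟩, rfl⟩)))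
          · exact hwmem x hx'
        · rw [eval_pre0_cons]
          show some ((h :: t).foldl (mul0 S R) g₁) = _
          rw [List.foldl_cons, List.foldl_assoc, hwfold]
          rw [show mul0 S R g₁ (some ⟨(idf ub, S.mul (tf ub) w', μ), v₂⟩) =
              some ⟨(i, S.mul (S.mul (sf ub) (pf ub)) (S.mul (tf ub) w'), μ),
                prod_valid S v₁ v₂ (R.P_src _ _ _ (hPf ub)) (R.P_tgt _ _ _ (hPf ub))⟩
            from mul0_some_eq (hPf ub)]
          refine Option.some_inj.2 (Option.some_inj.2 (Subtype.ext ?_))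
          show (i, S.mul (S.mul (sf ub) (pf ub)) (S.mul (tf ub) w'), μ) = (i, z, μ)
          have chase : S.mul (S.mul (sf ub) (pf ub)) (S.mul (tf ub) w')
              = S.mul b w' := by
            rw [← S.mul_assoc' _ (tf ub) w' c4 c5, ← hdf ub]
          rw [chase, ← hfold, List.foldl_cons]
          have := aux_foldl_mul S hchy hby
          rw [this]
        -- end cons case
    · -- z is outside U, hence a generator itself
      refine ⟨[some ⟨(i, z, μ), hvz⟩], by simp, ?_, pre0_chain _, rfl⟩
      intro x hx
      erw [List.mem_singleton] at hx
      subst hx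
      exact hmemX _ hvz (Or.inl (Or.inl (Or.inl hz)))

end Sufficiency


section Transfer

open Rees

variable {O A I Λ : Type} {S : Sgpd O A}

/-- The `Data0` associated to a zero-free sandwich matrix. -/
def toData0 (S : Sgpd O A) (R : Rees.Data S I Λ) : Rees.Data0 S I Λ where
  F := R.F
  G := R.G
  P := fun lam i => some (R.P lam i)
  F_into := R.F_into
  F_onto := R.F_onto
  G_into := R.G_into
  G_onto := R.G_onto
  P_src := fun lam i p hp => by
    injection hp with h; rw [← h]; exact R.P_src lam i
  P_tgt := fun lam i p hp => by
    injection hp with h; rw [← h]; exact R.P_tgt lam i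

theorem SPS_eq_SPS0 (R : Rees.Data S I Λ) :
    Rees.SPS S R = Rees.SPS0 S (toData0 S R) := by
  ext a
  constructor
  · rintro ⟨s, t, lam, i, h1, h2, h3⟩
    exact ⟨s, R.P lam i, t, lam, i, rfl, h1, h2, h3⟩
  · rintro ⟨s, p, t, lam, i, hp, h1, h2, h3⟩
    obtain rfl : R.P lam i = p := by injection hp
    exact ⟨s, t, lam, i, h1, h2, h3⟩

theorem mul0_toData0 (R : Rees.Data S I Λ) (x y : Rees.Carrier S R) :
    mul0 S (toData0 S R) (some x) (some y) = some (Rees.mul S R x y) := by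
  obtain ⟨⟨i, a, lam⟩, hx⟩ := x
  obtain ⟨⟨j, b, mu⟩, hy⟩ := y
  erw [mul0_some_eq (show (toData0 S R).P lam j = some (R.P lam j) from rfl)]
  rfl

theorem foldl_mul0_toData0 (R : Rees.Data S I Λ) :
    ∀ (l : List (Rees.Carrier S R)) (g : Rees.Carrier S R),
    List.foldl (mul0 S (toData0 S R)) (some g) (l.map some) =
      some (List.foldl (Rees.mul S R) g l)
  | [], _ => rfl
  | x :: l, g => by
    erw [List.map_cons, List.foldl_cons, List.foldl_cons, mul0_toData0]
    exact foldl_mul0_toData0 R l (Rees.mul S R g x)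

theorem foldl_mul0_to_mul (R : Rees.Data S I Λ) :
    ∀ (l : List (Rees.Carrier0 S (toData0 S R))) (g trip : Rees.Carrier S R),
    List.foldl (mul0 S (toData0 S R)) (some g) l = some trip →
    ∃ l' : List (Rees.Carrier S R), l = l'.map some ∧
      List.foldl (Rees.mul S R) g l' = trip
  | [], g, trip, h => ⟨[], rfl, by injection h⟩
  | x :: l, g, trip, h => by
    erw [List.foldl_cons] at h
    rcases hmx : mul0 S (toData0 S R) (some g) x with _ | td
    · rw [hmx, foldl_mul0_none] at h; exact absurd h (by simp)
    rw [hmx] at h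
    obtain ⟨tg, tx, p, hg, hx, -, -⟩ := mul0_some_inv hmx
    subst hx
    erw [mul0_toData0] at hmx
    obtain rfl : Rees.mul S R g tx = td := by injection hmx
    obtain ⟨l', rfl, hfold⟩ := foldl_mul0_to_mul R l _ trip h
    exact ⟨tx :: l', rfl, by erw [List.foldl_cons]; exact hfold⟩

theorem pre_chain (R : Rees.Data S I Λ) (l : List (Rees.Carrier S R)) :
    IsPathChain (Rees.pre S R).src (Rees.pre S R).tgt l := by
  induction l with
  | nil => exact List.isChain_nil
  | cons x l ih => exact List.isChain_cons.2 ⟨fun y _ => rfl, ih⟩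

theorem pre_fg_iff_pre0_fg (R : Rees.Data S I Λ) :
    IsFG (Rees.pre S R) ↔ IsFG (Rees.pre0 S (toData0 S R)) := by
  constructor
  · rintro ⟨X, hXfin, hXgen⟩
    refine ⟨insert none (some '' X), (hXfin.image _).insert _, ?_⟩
    intro m
    cases m with
    | none =>
      exact ⟨[none], by simp, by intro x hx; obtain rfl := List.mem_singleton.1 hx; exact Set.mem_insert _ _, pre0_chain _, rfl⟩
    | some trip =>
      obtain ⟨l, hlne, hlmem, -, hleval⟩ := hXgen trip
      obtain ⟨e, l', rfl⟩ := List.exists_cons_of_ne_nil hlne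
      rw [aux_evalPath_eq] at hleval
      have hfold : List.foldl (Rees.mul S R) e l' = trip := by injection hleval
      refine ⟨some e :: l'.map some, by simp, ?_, pre0_chain _, ?_⟩
      · intro x hx
        rcases List.mem_cons.1 hx with rfl | hx'
        · exact Or.inr ⟨e, hlmem e (List.mem_cons_self), rfl⟩
        · obtain ⟨y, hy, rfl⟩ := List.mem_map.1 hx'
          exact Or.inr ⟨y, hlmem y (List.mem_cons_of_mem e hy), rfl⟩
      · erw [eval_pre0_cons]
        show some (List.foldl (mul0 S (toData0 S R)) (some e) (l'.map some)) = _
        erw [foldl_mul0_toData0, hfold]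
        rfl
  · rintro ⟨X₀, hX₀fin, hX₀gen⟩
    refine ⟨some ⁻¹' X₀, hX₀fin.preimage ((Option.some_injective _).injOn), ?_⟩
    intro m
    obtain ⟨e, l, hmem, hfold⟩ := pre0_word (R := toData0 S R) hX₀gen m
    obtain ⟨te, rfl, -⟩ := foldl_mul0_fst l e m hfold
    obtain ⟨l', rfl, hfold'⟩ := foldl_mul0_to_mul R l te m hfold
    refine ⟨te :: l', by simp, ?_, pre_chain R _, ?_⟩
    · intro x hx
      rcases List.mem_cons.1 hx with rfl | hx'
      · exact hmem _ (List.mem_cons_self)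
      · exact hmem _ (List.mem_cons_of_mem _ (List.mem_map_of_mem (f := some) hx'))
    · erw [aux_evalPath_eq]
      exact congrArg some hfold'

end Transfer

/-- Theorem 4.2: a Rees matrix semigroup (with or without zero) over an
isolation-free semigroupoid is finitely generated if and only if the indexing
sets are finite, the semigroupoid is finitely generated, and `S P' S` is a
cofinite subsemigroupoid of `S`. -/
theorem stmt_19 {O A I Λ : Type} (S : Sgpd O A) (hne : Nonempty A)
    (hiso : IsolationFree S.toPreSgpd) :
    (∀ R : Rees.Data0 S I Λ,
      IsFG (Rees.pre0 S R) ↔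
        (Finite I ∧ Finite Λ ∧ IsFG S.toPreSgpd ∧
          { a : A | a ∉ Rees.SPS0 S R }.Finite)) ∧
    (∀ R : Rees.Data S I Λ,
      IsFG (Rees.pre S R) ↔
        (Finite I ∧ Finite Λ ∧ IsFG S.toPreSgpd ∧
          { a : A | a ∉ Rees.SPS S R }.Finite)) := by
  constructor
  · intro R
    exact ⟨fun hfg => fg0_necessary S R hfg,
      fun ⟨hI, hΛ, hSfg, hcof⟩ => fg0_sufficient S R hI hΛ hSfg hcof⟩
  · intro R
    rw [pre_fg_iff_pre0_fg R, SPS_eq_SPS0 R]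
    exact ⟨fun hfg => fg0_necessary S _ hfg,
      fun ⟨hI, hΛ, hSfg, hcof⟩ => fg0_sufficient S _ hI hΛ hSfg hcof⟩

end AutoRees
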